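/- arXiv:0901.0137 — 7 statements merged into one kernel-verified Lean document; each statement's English description precedes it below -/
import Mathlib

section
/- Let G be a nonabelian group. The following four conditions are equivalent: (a) for every g ∉ Z(G), the centralizer C_G(g) is abelian; (b) for all g, h ∉ Z(G), if g and h commute then C_G(g) = C_G(h); (c) for all g, h, k ∈ G with h ∉ Z(G), if g commutes with h and h commutes with k, then g commutes with k; (d) for all subgroups A, B ≤ G, if Z(G) < C_G(A) ≤ C_G(B) < G then C_G(A) = C_G(B). -/
/-! Everything reduces to condition (c), transitivity of commutation through noncentral elements.
For (c) ⇒ (d): pick a noncentral `t ∈ C(A)` and a noncentral `b ∈ B` (one exists since `C(B) ≠ G`);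
any `x ∈ C(B)` commutes with `b`, as does `t ∈ C(A) ≤ C(B)`, so `x` commutes with `t` and hence
with all of `A`. For (d) ⇒ (b): for commuting noncentral `g, h`, the subgroup generated by `g` and
`h` has centralizer `C(g) ∩ C(h)`, which lies strictly between `Z(G)` and both `C(g)` and `C(h)`. -/

open Subgroup

section

variable {G : Type*} [Group G]

theorem Subgroup.centralizer_lt_top_iff_not_subset_center {s : Set G} :
    centralizer s < ⊤ ↔ ¬ s ⊆ center G := by
  rw [lt_top_iff_ne_top, Ne, centralizer_eq_top_iff_subset]

theorem Subgroup.center_lt_centralizer_of_mem {s : Set G} {g : G} (hg : g ∈ centralizer s)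
    (hgc : g ∉ center G) : center G < centralizer s :=
  SetLike.lt_iff_le_and_exists.2 ⟨center_le_centralizer s, g, hg, hgc⟩

theorem commute_trans_of_centralizer_eq
    (h2 : ∀ g h : G, g ∉ center G → h ∉ center G → Commute g h →
      centralizer {g} = centralizer {h})
    {g h k : G} (hh : h ∉ center G) (hgh : Commute g h) (hhk : Commute h k) : Commute g k := by
  by_cases hgc : g ∈ center G
  · exact (mem_center_iff.1 hgc k).symm
  by_cases hkc : k ∈ center G
  · exact mem_center_iff.1 hkc g
  have hk : k ∈ centralizer {g} := by
    rw [h2 g h hgc hh hgh, h2 h k hh hkc hhk]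
    exact mem_centralizer_singleton_iff.2 rfl
  exact (mem_centralizer_singleton_iff.1 hk).symm

theorem centralizer_eq_of_commute_trans
    (h3 : ∀ g h k : G, h ∉ center G → Commute g h → Commute h k → Commute g k)
    {s t : Set G} (hs : center G < centralizer s) (hst : centralizer s ≤ centralizer t)
    (ht : centralizer t < ⊤) : centralizer s = centralizer t := by
  obtain ⟨b, hbt, hbc⟩ := Set.not_subset.1 (centralizer_lt_top_iff_not_subset_center.1 ht)
  obtain ⟨-, c, hcs, hcc⟩ := SetLike.lt_iff_le_and_exists.1 hs
  refine hst.antisymm fun x hx a ha => ?_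
  have hxc : Commute x c := h3 x b c hbc (hx b hbt).symm (hst hcs b hbt)
  exact (h3 x c a hcc hxc (hcs a ha).symm).symm

theorem centralizer_singleton_eq_of_centralizer_eq
    (h4 : ∀ s t : Set G, center G < centralizer s → centralizer s ≤ centralizer t →
      centralizer t < ⊤ → centralizer s = centralizer t)
    {g h : G} (hg : g ∉ center G) (hh : h ∉ center G) (hgh : Commute g h) :
    centralizer {g} = centralizer {h} := by
  have hg_mem : g ∈ centralizer {g, h} := by
    rintro y (rfl | rfl)
    exacts [rfl, hgh.symm]
  have hpair : ∀ u ∈ ({g, h} : Set G), u ∉ center G → centralizer {g, h} = centralizer {u} :=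
    fun u hu huc => h4 _ _ (center_lt_centralizer_of_mem hg_mem hg)
      (centralizer_le (Set.singleton_subset_iff.2 hu))
      (centralizer_lt_top_iff_not_subset_center.2 (by simpa using huc))
  rw [← hpair g (by simp) hg, hpair h (by simp) hh]

end

theorem tc_group_characterizations_general (G : Type*) [Group G] :
    [ (∀ g : G, g ∉ Subgroup.center G →
        ∀ x ∈ Subgroup.centralizer {g}, ∀ y ∈ Subgroup.centralizer {g}, x * y = y * x),
      (∀ g h : G, g ∉ Subgroup.center G → h ∉ Subgroup.center G →
        g * h = h * g → Subgroup.centralizer {g} = Subgroup.centralizer {h}),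
      (∀ g h k : G, h ∉ Subgroup.center G →
        g * h = h * g → h * k = k * h → g * k = k * g),
      (∀ A B : Subgroup G,
        Subgroup.center G < Subgroup.centralizer (A : Set G) →
        Subgroup.centralizer (A : Set G) ≤ Subgroup.centralizer (B : Set G) →
        Subgroup.centralizer (B : Set G) < ⊤ →
        Subgroup.centralizer (A : Set G) = Subgroup.centralizer (B : Set G)) ].TFAE := by
  tfae_have 1 → 3
  | h1, g, h, k, hh, hgh, hhk =>
    h1 h hh g (mem_centralizer_singleton_iff.2 hgh) k (mem_centralizer_singleton_iff.2 hhk.symm)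
  tfae_have 3 → 1
  | h3, g, hg, x, hx, y, hy =>
    h3 x g y hg (mem_centralizer_singleton_iff.1 hx) (mem_centralizer_singleton_iff.1 hy).symm
  tfae_have 2 → 3
  | h2, _, _, _, hh, hgh, hhk => commute_trans_of_centralizer_eq h2 hh hgh hhk
  tfae_have 3 → 4
  | h3, _, _, hA, hAB, hB => centralizer_eq_of_commute_trans h3 hA hAB hB
  tfae_have 4 → 2
  | h4, _, _, hg, hh, hgh => centralizer_singleton_eq_of_centralizer_eq
      (fun s t => by simpa only [centralizer_closure] using h4 (closure s) (closure t)) hg hh hgh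
  tfae_finish

/-- For a nonabelian group `G`, the four conditions characterizing transitively
commutative (TC) groups are equivalent:
(a) centralizers of noncentral elements are abelian;
(b) commuting noncentral elements have equal centralizers;
(c) commutation is transitive through noncentral elements;
(d) between the center and the whole group, centralizers of subgroups that are
comparable must be equal. -/
theorem tc_group_characterizations (G : Type*) [Group G]
    (hG : ¬ ∀ a b : G, a * b = b * a) :
    [ (∀ g : G, g ∉ Subgroup.center G →
        ∀ x ∈ Subgroup.centralizer {g}, ∀ y ∈ Subgroup.centralizer {g}, x * y = y * x),
      (∀ g h : G, g ∉ Subgroup.center G → h ∉ Subgroup.center G →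
        g * h = h * g → Subgroup.centralizer {g} = Subgroup.centralizer {h}),
      (∀ g h k : G, h ∉ Subgroup.center G →
        g * h = h * g → h * k = k * h → g * k = k * g),
      (∀ A B : Subgroup G,
        Subgroup.center G < Subgroup.centralizer (A : Set G) →
        Subgroup.centralizer (A : Set G) ≤ Subgroup.centralizer (B : Set G) →
        Subgroup.centralizer (B : Set G) < ⊤ →
        Subgroup.centralizer (A : Set G) = Subgroup.centralizer (B : Set G)) ].TFAE :=
  tc_group_characterizations_general G
end

section
/- Let G be a finite nonabelian transitively commutative group with trivial center. Then every Sylow p-subgroup of G is abelian, and any two distinct Sylow p-subgroups of G (for the same prime p) intersect trivially. -/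
/-! A nontrivial `p`-subgroup `H` has a central element `z ≠ 1`, so `H` lies in the centralizer
of a noncentral element, which is abelian. If two Sylow `p`-subgroups share some `x ≠ 1`, both lie
in the abelian centralizer of `x`; hence one centralizes, and so normalizes, the other, and a
Sylow subgroup normalizing another one equals it. -/

open Subgroup

def IsTransitivelyCommutative (G : Type*) [Group G] : Prop :=
  ∀ g : G, g ∉ center G → ∀ x ∈ centralizer {g}, ∀ y ∈ centralizer {g}, x * y = y * x

namespace IsTransitivelyCommutative

variable {G : Type*} [Group G] (hTC : IsTransitivelyCommutative G) (hZ : center G = ⊥)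
include hTC hZ

theorem commute_of_mem_centralizer {z x y : G} (hz : z ≠ 1) (hx : x ∈ centralizer {z})
    (hy : y ∈ centralizer {z}) : Commute x y :=
  hTC z (by rwa [hZ, mem_bot]) x hx y hy

theorem commute_of_mem_of_isPGroup {p : ℕ} [Fact p.Prime] {H : Subgroup G} [Finite H]
    (hH : IsPGroup p H) {x y : G} (hx : x ∈ H) (hy : y ∈ H) : Commute x y := by
  rcases H.bot_or_nontrivial with rfl | hH1
  · rw [mem_bot] at hx; simp [hx]
  have := hH.center_nontrivial
  obtain ⟨z, hz⟩ := exists_ne (1 : center H)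
  have hz1 : (z : G) ≠ 1 := fun h => hz (Subtype.ext (Subtype.ext h))
  have hHz : H ≤ centralizer {(z : G)} := fun h hh =>
    mem_centralizer_singleton_iff.mpr (congrArg Subtype.val (mem_center_iff.mp z.2 ⟨h, hh⟩))
  exact hTC.commute_of_mem_centralizer hZ hz1 (hHz hx) (hHz hy)

theorem le_centralizer_of_mem_inf {P Q : Subgroup G}
    (hP : ∀ a ∈ P, ∀ b ∈ P, Commute a b) (hQ : ∀ a ∈ Q, ∀ b ∈ Q, Commute a b)
    {x : G} (hx : x ∈ P ⊓ Q) (hx1 : x ≠ 1) : P ≤ centralizer Q := fun a ha b hb =>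
  (hTC.commute_of_mem_centralizer hZ hx1
    (mem_centralizer_singleton_iff.mpr (hP a ha x hx.1))
    (mem_centralizer_singleton_iff.mpr (hQ b hb x hx.2))).symm

end IsTransitivelyCommutative

theorem Sylow.eq_of_le_normalizer {G : Type*} [Group G] {p : ℕ} {P Q : Sylow p G}
    (h : (P : Subgroup G) ≤ normalizer (Q : Subgroup G)) : P = Q := by
  have hPQ : (P : Subgroup G) ≤ Q :=
    (le_inf le_rfl h).trans ((P.2.inf_normalizer_sylow Q).le.trans inf_le_right)
  exact Sylow.ext (P.3 Q.2 hPQ).symm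

theorem tc_trivial_center_sylow_abelian_and_trivial_intersection_general
    (G : Type*) [Group G] [Finite G]
    (hTC : ∀ g : G, g ∉ Subgroup.center G →
      ∀ x ∈ Subgroup.centralizer {g}, ∀ y ∈ Subgroup.centralizer {g}, x * y = y * x)
    (hZ : Subgroup.center G = ⊥) (p : ℕ) (hp : p.Prime) :
    (∀ P : Sylow p G, ∀ x ∈ (P : Subgroup G), ∀ y ∈ (P : Subgroup G), x * y = y * x) ∧
    (∀ P Q : Sylow p G, P ≠ Q → (P : Subgroup G) ⊓ (Q : Subgroup G) = ⊥) := by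
  have hTC : IsTransitivelyCommutative G := hTC
  have := Fact.mk hp
  have hcomm (P : Sylow p G) : ∀ x ∈ (P : Subgroup G), ∀ y ∈ (P : Subgroup G), Commute x y :=
    fun _ hx _ hy => hTC.commute_of_mem_of_isPGroup hZ P.2 hx hy
  refine ⟨hcomm, fun P Q hPQ => ?_⟩
  by_contra hne
  obtain ⟨x, hx, hx1⟩ := (_ ⊓ _ : Subgroup G).bot_or_exists_ne_one.resolve_left hne
  exact hPQ (Sylow.eq_of_le_normalizer
    ((hTC.le_centralizer_of_mem_inf hZ (hcomm P) (hcomm Q) hx hx1).trans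
      (Subgroup.centralizer_le_normalizer _)))

/-- In a finite nonabelian transitively commutative group with trivial center,
the Sylow subgroups are abelian and distinct Sylow `p`-subgroups intersect
trivially. -/
theorem tc_trivial_center_sylow_abelian_and_trivial_intersection
    (G : Type*) [Group G] [Finite G]
    (hnonab : ¬ ∀ a b : G, a * b = b * a)
    (hTC : ∀ g : G, g ∉ Subgroup.center G →
      ∀ x ∈ Subgroup.centralizer {g}, ∀ y ∈ Subgroup.centralizer {g}, x * y = y * x)
    (hZ : Subgroup.center G = ⊥) (p : ℕ) (hp : p.Prime) :
    (∀ P : Sylow p G, ∀ x ∈ (P : Subgroup G), ∀ y ∈ (P : Subgroup G), x * y = y * x) ∧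
    (∀ P Q : Sylow p G, P ≠ Q → (P : Subgroup G) ⊓ (Q : Subgroup G) = ⊥) :=
  tc_trivial_center_sylow_abelian_and_trivial_intersection_general G hTC hZ p hp
end

section
/- Let G be a finite nonabelian transitively commutative group with trivial center. A subgroup M ≤ G is a maximal abelian subgroup of G (i.e., M is abelian and is not properly contained in any abelian subgroup of G) if and only if there exists an element x ≠ 1 in G with M = C_G(x). -/
namespace Subgroup

variable {G : Type*} [Group G]

def IsAbelian (M : Subgroup G) : Prop :=
  ∀ x ∈ M, ∀ y ∈ M, x * y = y * x

def IsMaximalAbelian (M : Subgroup G) : Prop :=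
  M.IsAbelian ∧ ∀ N : Subgroup G, N.IsAbelian → M ≤ N → M = N

theorem isAbelian_zpowers (a : G) : (zpowers a).IsAbelian := by
  rintro _ ⟨i, rfl⟩ _ ⟨j, rfl⟩
  exact zpow_mul_comm a i j

theorem IsAbelian.le_centralizer_singleton {M : Subgroup G} (hM : M.IsAbelian) {x : G}
    (hx : x ∈ M) : M ≤ centralizer {x} :=
  fun m hm => mem_centralizer_singleton_iff.mpr (hM m hm x hx)

theorem isMaximalAbelian_centralizer_singleton {x : G}
    (hx : (centralizer {x}).IsAbelian) : (centralizer {x}).IsMaximalAbelian :=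
  ⟨hx, fun _ hN hle => le_antisymm hle <|
    hN.le_centralizer_singleton (hle (mem_centralizer_singleton_iff.mpr rfl))⟩

theorem IsMaximalAbelian.eq_centralizer_singleton {M : Subgroup G} (hM : M.IsMaximalAbelian)
    {x : G} (hx : x ∈ M) (hC : (centralizer {x}).IsAbelian) : M = centralizer {x} :=
  hM.2 _ hC (hM.1.le_centralizer_singleton hx)

theorem IsMaximalAbelian.ne_bot [Nontrivial G] {M : Subgroup G} (hM : M.IsMaximalAbelian) :
    M ≠ ⊥ := by
  rintro rfl
  obtain ⟨a, ha⟩ := exists_ne (1 : G)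
  have hbot : ⊥ = zpowers a := hM.2 _ (isAbelian_zpowers a) bot_le
  exact ha (mem_bot.mp (hbot ▸ mem_zpowers a))

end Subgroup

open Subgroup in
theorem tc_trivial_center_maximal_abelian_iff_centralizer_general
    (G : Type*) [Group G]
    (hnonab : ¬ ∀ a b : G, a * b = b * a)
    (hTC : ∀ g : G, g ∉ Subgroup.center G →
      ∀ x ∈ Subgroup.centralizer {g}, ∀ y ∈ Subgroup.centralizer {g}, x * y = y * x)
    (hZ : Subgroup.center G = ⊥) (M : Subgroup G) :
    ((∀ x ∈ M, ∀ y ∈ M, x * y = y * x) ∧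
      ∀ N : Subgroup G, (∀ x ∈ N, ∀ y ∈ N, x * y = y * x) → M ≤ N → M = N) ↔
    ∃ x : G, x ≠ 1 ∧ M = Subgroup.centralizer {x} := by
  have hC : ∀ x : G, x ≠ 1 → (centralizer {x}).IsAbelian := fun x hx =>
    hTC x (by rwa [hZ, mem_bot])
  have : Nontrivial G := by
    by_contra h
    exact hnonab fun a b => (not_nontrivial_iff_subsingleton.mp h).elim _ _
  change M.IsMaximalAbelian ↔ _
  constructor
  · intro hM
    obtain ⟨x, hxM, hx⟩ := (M.bot_or_exists_ne_one).resolve_left hM.ne_bot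
    exact ⟨x, hx, hM.eq_centralizer_singleton hxM (hC x hx)⟩
  · rintro ⟨x, hx, rfl⟩
    exact isMaximalAbelian_centralizer_singleton (hC x hx)

/-- In a finite nonabelian transitively commutative group with trivial center,
a subgroup is maximal abelian if and only if it is the centralizer of some
nontrivial element. -/
theorem tc_trivial_center_maximal_abelian_iff_centralizer
    (G : Type*) [Group G] [Finite G]
    (hnonab : ¬ ∀ a b : G, a * b = b * a)
    (hTC : ∀ g : G, g ∉ Subgroup.center G →
      ∀ x ∈ Subgroup.centralizer {g}, ∀ y ∈ Subgroup.centralizer {g}, x * y = y * x)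
    (hZ : Subgroup.center G = ⊥) (M : Subgroup G) :
    ((∀ x ∈ M, ∀ y ∈ M, x * y = y * x) ∧
      ∀ N : Subgroup G, (∀ x ∈ N, ∀ y ∈ N, x * y = y * x) → M ≤ N → M = N) ↔
    ∃ x : G, x ≠ 1 ∧ M = Subgroup.centralizer {x} :=
  tc_trivial_center_maximal_abelian_iff_centralizer_general G hnonab hTC hZ M
end

section
/- Let G be a finite nonabelian transitively commutative group with trivial center, and let M_1, …, M_N be its maximal abelian subgroups. Then for every n ≥ 1, the number of n-tuples (x_1, …, x_n) ∈ G^n of pairwise commuting elements equals 1 + Σ_{j=1}^{N} (|M_j|^n − 1). -/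
/-- For a finite nonabelian transitively commutative group `G` with trivial
center and maximal abelian subgroups `M 1, …, M N`, the number of `n`-tuples of
pairwise commuting elements of `G` is `1 + ∑ⱼ (|Mⱼ|^n - 1)`. -/
theorem tc_card_commuting_tuples
    (G : Type*) [Group G] [Finite G]
    (hnonab : ¬ ∀ a b : G, a * b = b * a)
    (hTC : ∀ g : G, g ∉ Subgroup.center G →
      ∀ x ∈ Subgroup.centralizer {g}, ∀ y ∈ Subgroup.centralizer {g}, x * y = y * x)
    (hZ : Subgroup.center G = ⊥)
    (N : ℕ) (M : Fin N → Subgroup G)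
    (hinj : Function.Injective M)
    (hmax : ∀ j, (∀ x ∈ M j, ∀ y ∈ M j, x * y = y * x) ∧
      ∀ N' : Subgroup G, (∀ x ∈ N', ∀ y ∈ N', x * y = y * x) → M j ≤ N' → M j = N')
    (hall : ∀ N' : Subgroup G,
      ((∀ x ∈ N', ∀ y ∈ N', x * y = y * x) ∧
        ∀ N'' : Subgroup G, (∀ x ∈ N'', ∀ y ∈ N'', x * y = y * x) → N' ≤ N'' → N' = N'') →
      ∃ j, N' = M j)
    (n : ℕ) (hn : 1 ≤ n) :
    Nat.card {x : Fin n → G // ∀ i j, Commute (x i) (x j)} =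
      1 + ∑ j : Fin N, (Nat.card (M j) ^ n - 1) := by
  classical
  have : Fintype G := Fintype.ofFinite G
  have hdisj : ∀ j k : Fin N, j ≠ k → ∀ g : G, g ∈ M j → g ∈ M k → g = (1:G) := by
    intro j k hjk g hgj hgk
    by_contra hg
    have hgc : g ∉ Subgroup.center G := by
      rw [hZ]; simpa using hg
    have hcent : ∀ l : Fin N, g ∈ M l → M l = Subgroup.centralizer {g} := by
      intro l hgl
      refine (hmax l).2 _ (hTC g hgc) ?_
      intro x hx
      rw [Subgroup.mem_centralizer_iff]
      intro y hy
      simp only [Set.mem_singleton_iff] at hy; subst hy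
      exact (hmax l).1 _ hgl x hx
    exact hjk (hinj ((hcent j hgj).trans (hcent k hgk).symm))
  have hcover : ∀ x : Fin n → G, (∀ i j, Commute (x i) (x j)) →
      (∃ i, x i ≠ 1) → ∃ j, ∀ i, x i ∈ M j := by
    rintro x hx ⟨i0, hi0⟩
    have hgc : x i0 ∉ Subgroup.center G := by rw [hZ]; simpa using hi0
    set C := Subgroup.centralizer {x i0} with hCdef
    have hx0C : x i0 ∈ C := by
      rw [hCdef, Subgroup.mem_centralizer_iff]
      intro y hy; simp only [Set.mem_singleton_iff] at hy; subst hy; rfl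
    have hC : ∀ a ∈ C, ∀ b ∈ C, a*b = b*a := hTC _ hgc
    have hmaxC : ∀ N'' : Subgroup G, (∀ a ∈ N'', ∀ b ∈ N'', a*b=b*a) → C ≤ N'' → C = N'' := by
      intro N'' hN'' hle
      refine le_antisymm hle ?_
      intro z hz
      rw [hCdef, Subgroup.mem_centralizer_iff]
      intro y hy; simp only [Set.mem_singleton_iff] at hy; subst hy
      exact hN'' _ (hle hx0C) _ hz
    obtain ⟨j, hj⟩ := hall C ⟨hC, hmaxC⟩
    refine ⟨j, fun i => ?_⟩
    rw [← hj, hCdef, Subgroup.mem_centralizer_iff]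
    intro y hy; simp only [Set.mem_singleton_iff] at hy; subst hy
    exact hx i0 i
  set one1 : Fin n → G := fun _ => 1 with hone1
  set B : Fin N → Finset (Fin n → G) :=
    fun j => Finset.univ.filter (fun x => x ≠ one1 ∧ ∀ i, x i ∈ M j) with hB
  set S : Finset (Fin n → G) :=
    Finset.univ.filter (fun x => ∀ i j, Commute (x i) (x j)) with hS
  have hSeq : S = insert one1 (Finset.univ.biUnion B) := by
    ext x
    simp only [hS, hB, Finset.mem_insert, Finset.mem_biUnion, Finset.mem_filter,
      Finset.mem_univ, true_and]
    constructor
    · intro hx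
      by_cases hx1 : x = one1
      · exact Or.inl hx1
      · right
        have hex : ∃ i, x i ≠ 1 := by
          by_contra h; push_neg at h
          exact hx1 (funext fun i => h i)
        obtain ⟨j, hj⟩ := hcover x hx hex
        exact ⟨j, hx1, hj⟩
    · rintro (rfl | ⟨j, hx1, hj⟩)
      · intro i k
        show one1 i * one1 k = one1 k * one1 i
        simp [hone1]
      · intro i k
        exact (hmax j).1 _ (hj i) _ (hj k)
  have hnotmem : one1 ∉ Finset.univ.biUnion B := by
    intro h
    rw [Finset.mem_biUnion] at h
    obtain ⟨j, -, hj⟩ := h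
    rw [hB, Finset.mem_filter] at hj
    exact hj.2.1 rfl
  have hdisjB : ∀ j ∈ Finset.univ, ∀ k ∈ Finset.univ, j ≠ k → Disjoint (B j) (B k) := by
    intro j _ k _ hjk
    rw [Finset.disjoint_left]
    intro x hxj hxk
    simp only [hB, Finset.mem_filter, Finset.mem_univ, true_and] at hxj hxk
    apply hxj.1
    funext i
    exact hdisj j k hjk (x i) (hxj.2 i) (hxk.2 i)
  have hcardB : ∀ j, (B j).card = Nat.card (M j) ^ n - 1 := by
    intro j
    have h1 : B j = (Finset.univ.filter (fun x : Fin n → G => ∀ i, x i ∈ M j)).erase one1 := by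
      ext x
      simp only [hB, Finset.mem_filter, Finset.mem_univ, true_and, Finset.mem_erase]
    have hmem1 : one1 ∈ Finset.univ.filter (fun x : Fin n → G => ∀ i, x i ∈ M j) := by
      simp only [Finset.mem_filter, Finset.mem_univ, true_and]
      intro i; exact (M j).one_mem
    have h2 : (Finset.univ.filter (fun x : Fin n → G => ∀ i, x i ∈ M j)).card
        = Nat.card (M j) ^ n := by
      rw [← Fintype.card_subtype]
      have e : {x : Fin n → G // ∀ i, x i ∈ M j} ≃ (Fin n → (M j)) :=
        { toFun := fun x i => ⟨x.1 i, x.2 i⟩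
          invFun := fun f => ⟨fun i => (f i : G), fun i => (f i).2⟩
          left_inv := fun x => rfl
          right_inv := fun f => rfl }
      rw [Fintype.card_congr e, Fintype.card_fun, Fintype.card_fin,
        Nat.card_eq_fintype_card]
    rw [h1, Finset.card_erase_of_mem hmem1, h2]
  rw [Nat.card_eq_fintype_card, Fintype.card_subtype, ← hS, hSeq,
    Finset.card_insert_of_notMem hnotmem, Finset.card_biUnion hdisjB]
  simp only [hcardB]
  rw [Nat.add_comm]
end

section
/- For every n ≥ 1, the number of n-tuples (x_1, …, x_n) of pairwise commuting elements of the alternating group A_5 equals 1 + 5·(4^n − 1) + 10·(3^n − 1) + 6·(5^n − 1). -/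
abbrev A5 := alternatingGroup (Fin 5)

/-- The centralizer of `a` in `A₅`, as a finset. -/
def A5C (a : A5) : Finset A5 := Finset.univ.filter (fun b => a * b = b * a)

/-- The collection of centralizers of nontrivial elements of `A₅`. -/
def A5T : Finset (Finset A5) := (Finset.univ.filter (fun a : A5 => a ≠ 1)).image A5C

set_option maxRecDepth 100000 in
set_option maxHeartbeats 8000000 in
lemma A5C_abelian : ∀ a : A5, a ≠ 1 → ∀ b ∈ A5C a, ∀ c ∈ A5C a, b * c = c * b := by
  decide

set_option maxRecDepth 100000 in
set_option maxHeartbeats 8000000 in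
lemma A5C_eq : ∀ a b : A5, a ≠ 1 → b ≠ 1 → a * b = b * a → A5C a = A5C b := by
  decide

set_option maxRecDepth 100000 in
set_option maxHeartbeats 8000000 in
lemma A5card3 : (A5T.filter (fun S => S.card = 3)).card = 10 := by decide

set_option maxRecDepth 100000 in
set_option maxHeartbeats 8000000 in
lemma A5card4 : (A5T.filter (fun S => S.card = 4)).card = 5 := by decide

set_option maxRecDepth 100000 in
set_option maxHeartbeats 8000000 in
lemma A5card5 : (A5T.filter (fun S => S.card = 5)).card = 6 := by decide

set_option maxRecDepth 100000 in
set_option maxHeartbeats 8000000 in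
lemma A5card_mem' : ∀ a : A5, a ≠ 1 → (A5C a).card = 3 ∨ (A5C a).card = 4 ∨ (A5C a).card = 5 := by
  decide

lemma A5card_mem : ∀ S ∈ A5T, S.card = 3 ∨ S.card = 4 ∨ S.card = 5 := by
  intro S hS
  obtain ⟨a, ha, rfl⟩ := Finset.mem_image.mp hS
  exact A5card_mem' a (by simpa using (Finset.mem_filter.mp ha).2)

lemma one_mem_A5C (a : A5) : (1 : A5) ∈ A5C a := by
  simp [A5C]

/-- The number of `n`-tuples of pairwise commuting elements of the alternating
group `A₅` is `1 + 5·(4ⁿ − 1) + 10·(3ⁿ − 1) + 6·(5ⁿ − 1)`. -/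
theorem card_commuting_tuples_alternatingGroup_five
    (n : ℕ) (hn : 1 ≤ n) :
    Nat.card {x : Fin n → alternatingGroup (Fin 5) // ∀ i j, Commute (x i) (x j)} =
      1 + 5 * (4 ^ n - 1) + 10 * (3 ^ n - 1) + 6 * (5 ^ n - 1) := by
  classical
  have hcard : Nat.card {x : Fin n → A5 // ∀ i j, Commute (x i) (x j)} =
      (Finset.univ.filter (fun x : Fin n → A5 => ∀ i j, Commute (x i) (x j))).card := by
    rw [Nat.card_eq_fintype_card, Fintype.card_subtype]
  have hone : ∀ i j : Fin n, Commute ((fun _ => (1:A5)) i) ((fun _ => (1:A5)) j) := by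
    intro i j; exact Commute.one_left 1
  set one : Fin n → A5 := fun _ => 1 with honedef
  set D : Finset A5 → Finset (Fin n → A5) :=
    fun S => (Fintype.piFinset (fun _ => S)).erase one with hD
  have hsplit : Finset.univ.filter (fun x : Fin n → A5 => ∀ i j, Commute (x i) (x j)) =
      insert one (A5T.biUnion D) := by
    ext x
    simp only [Finset.mem_filter, Finset.mem_univ, true_and, Finset.mem_insert,
      Finset.mem_biUnion, hD, Finset.mem_erase, Fintype.mem_piFinset]
    constructor
    · intro h
      by_cases hx : x = one
      · left; exact hx
      · right
        have hex : ∃ i, x i ≠ 1 := by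
          by_contra hc
          push_neg at hc
          exact hx (funext fun i => hc i)
        obtain ⟨i0, hi0⟩ := hex
        refine ⟨A5C (x i0), ?_, hx, fun i => ?_⟩
        · exact Finset.mem_image_of_mem _ (by simp [hi0])
        · simp only [A5C, Finset.mem_filter, Finset.mem_univ, true_and]
          exact h i0 i
    · rintro (rfl | ⟨S, hS, hx1, hxS⟩)
      · exact hone
      · obtain ⟨a, ha, rfl⟩ := Finset.mem_image.mp hS
        have ha1 : a ≠ 1 := by simpa using (Finset.mem_filter.mp ha).2
        intro i j
        exact A5C_abelian a ha1 _ (hxS i) _ (hxS j)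
  have hnotmem : one ∉ A5T.biUnion D := by
    simp [hD, Finset.mem_biUnion, Finset.mem_erase]
  have hdisj : ∀ S ∈ A5T, ∀ S' ∈ A5T, S ≠ S' → Disjoint (D S) (D S') := by
    intro S hS S' hS' hne
    rw [Finset.disjoint_left]
    intro x hx hx'
    simp only [hD, Finset.mem_erase, Fintype.mem_piFinset] at hx hx'
    obtain ⟨hx1, hxS⟩ := hx
    obtain ⟨_, hxS'⟩ := hx'
    have hex : ∃ i, x i ≠ 1 := by
      by_contra hc
      push_neg at hc
      exact hx1 (funext fun i => hc i)
    obtain ⟨i0, hi0⟩ := hex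
    obtain ⟨a, ha, rfl⟩ := Finset.mem_image.mp hS
    obtain ⟨a', ha', rfl⟩ := Finset.mem_image.mp hS'
    have ha1 : a ≠ 1 := by simpa using (Finset.mem_filter.mp ha).2
    have ha1' : a' ≠ 1 := by simpa using (Finset.mem_filter.mp ha').2
    have hcb : a * x i0 = x i0 * a := by
      have := hxS i0
      simpa only [A5C, Finset.mem_filter, Finset.mem_univ, true_and] using this
    have hcb' : a' * x i0 = x i0 * a' := by
      have := hxS' i0
      simpa only [A5C, Finset.mem_filter, Finset.mem_univ, true_and] using this
    exact hne ((A5C_eq a (x i0) ha1 hi0 hcb).trans (A5C_eq a' (x i0) ha1' hi0 hcb').symm)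
  have hDcard : ∀ S ∈ A5T, (D S).card = S.card ^ n - 1 := by
    intro S hS
    have h1S : (1 : A5) ∈ S := by
      obtain ⟨a, _, rfl⟩ := Finset.mem_image.mp hS
      exact one_mem_A5C a
    have hmem : one ∈ Fintype.piFinset (fun _ : Fin n => S) := by
      simp [honedef, Fintype.mem_piFinset, h1S]
    simp only [hD]
    rw [Finset.card_erase_of_mem hmem, Fintype.card_piFinset]
    simp [Finset.prod_const]
  have key : ∑ S ∈ A5T, (S.card ^ n - 1) =
      10 * (3 ^ n - 1) + 5 * (4 ^ n - 1) + 6 * (5 ^ n - 1) := by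
    have h345 : ∀ S ∈ A5T, S.card ∈ ({3, 4, 5} : Finset ℕ) := by
      intro S hS
      rcases A5card_mem S hS with h | h | h <;> simp [h]
    rw [← Finset.sum_fiberwise_of_maps_to h345 (fun S => S.card ^ n - 1)]
    have e3 : ∑ S ∈ A5T.filter (fun S => S.card = 3), (S.card ^ n - 1) = 10 * (3 ^ n - 1) := by
      rw [Finset.sum_congr rfl (fun S hS => by rw [(Finset.mem_filter.mp hS).2]),
        Finset.sum_const, A5card3, smul_eq_mul]
    have e4 : ∑ S ∈ A5T.filter (fun S => S.card = 4), (S.card ^ n - 1) = 5 * (4 ^ n - 1) := by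
      rw [Finset.sum_congr rfl (fun S hS => by rw [(Finset.mem_filter.mp hS).2]),
        Finset.sum_const, A5card4, smul_eq_mul]
    have e5 : ∑ S ∈ A5T.filter (fun S => S.card = 5), (S.card ^ n - 1) = 6 * (5 ^ n - 1) := by
      rw [Finset.sum_congr rfl (fun S hS => by rw [(Finset.mem_filter.mp hS).2]),
        Finset.sum_const, A5card5, smul_eq_mul]
    rw [show ({3, 4, 5} : Finset ℕ) = insert 3 (insert 4 {5}) from rfl]
    rw [Finset.sum_insert (by decide), Finset.sum_insert (by decide), Finset.sum_singleton]
    rw [e3, e4, e5]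
    ring
  have hsum : ∑ S ∈ A5T, (D S).card = ∑ S ∈ A5T, (S.card ^ n - 1) :=
    Finset.sum_congr rfl hDcard
  rw [hcard, hsplit, Finset.card_insert_of_notMem hnotmem, Finset.card_biUnion hdisj,
    hsum, key]
  ring
end

section
/- Let n ≥ 3 be odd and let D_{2n} = ⟨a, b | a^n = b^2 = 1, bab = a^{−1}⟩ be the dihedral group of order 2n. Its maximal abelian subgroups are the rotation subgroup ⟨a⟩ (cyclic of order n) and the n reflection subgroups ⟨a^i b⟩ (each cyclic of order 2, for 0 ≤ i < n), and D_{2n} has trivial center. Let P be the free product of these n+1 subgroups (the coproduct in the category of groups) and let π : P → D_{2n} be the canonical homomorphism induced by the inclusions of these subgroups into D_{2n}. Then the kernel of π is a free group of rank n² − 1. -/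
/-- The family of subgroups of the dihedral group `D_{2n}` consisting of the
rotation subgroup `⟨a⟩` (indexed by `none`) and the `n` reflection subgroups
`⟨aⁱb⟩` (indexed by `some i`). -/
def dihedralMaxAbelianFamily (n : ℕ) : Option (ZMod n) → Subgroup (DihedralGroup n)
  | none => Subgroup.zpowers (DihedralGroup.r 1)
  | some i => Subgroup.zpowers (DihedralGroup.sr i)

/-!
For odd `n`, every element of `D_{2n}` lies in one of the cyclic subgroups `⟨a⟩`, `⟨aⁱb⟩`, and
the centralizer of a nontrivial element of one of them is contained in it; this forces them to be
exactly the maximal abelian subgroups.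

The kernel is computed by the Reidemeister–Schreier method. Write `ρ_k`, `τ_i` for the images of
`r k ∈ ⟨a⟩` and `sr i ∈ ⟨aⁱb⟩` in the free product `P`, take the transversal `σ(r j) = ρ_j`,
`σ(sr j) = ρ_{-j} τ_0`, and let `s(p, d) = σ(π(p) d)⁻¹ p σ(d)`. All `s(ρ_k, d)` are trivial, the
`s(τ_i, d)` are the elements `c(i, j) = s(τ_i, r j)` and their inverses, and `c(0, 0) = 1`; so the
`n² − 1` elements `c(i, j)` with `(i, j) ≠ 0` generate the kernel. They are free: `P` maps to the
wreath product `F ≀ D_{2n}`, with `F` free on the pairs `(i, j) ≠ 0`, by `ρ_k ↦ (1, r k)` and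
`τ_i ↦ (f_i, sr i)`, where `f_i` records the elements `s(τ_i, d)` as letters; on the kernel, the
first component evaluated at `1` sends `c(i, j)` back to the letter `(i, j)`.
-/
open Subgroup

section MaximalCommutative

variable {G ι : Type*} [Group G]

theorem Subgroup.maximal_commutative_iff_exists_eq_zpowers (g : ι → G) (hg : ∀ k, g k ≠ 1)
    (hcover : ∀ x, ∃ k, x ∈ zpowers (g k))
    (hcent : ∀ k x y, x ∈ zpowers (g k) → x ≠ 1 → x * y = y * x → y ∈ zpowers (g k))
    (M : Subgroup G) :
    ((∀ x ∈ M, ∀ y ∈ M, x * y = y * x) ∧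
      ∀ N : Subgroup G, (∀ x ∈ N, ∀ y ∈ N, x * y = y * x) → M ≤ N → M = N) ↔
    ∃ k, M = zpowers (g k) := by
  have zpowers_comm : ∀ k, ∀ x ∈ zpowers (g k), ∀ y ∈ zpowers (g k), x * y = y * x := by
    rintro k _ ⟨a, rfl⟩ _ ⟨b, rfl⟩
    exact (Commute.zpow_zpow_self (g k) a b).eq
  constructor
  · rintro ⟨hcomm, hmax⟩
    by_cases hM : ∃ x ∈ M, x ≠ 1
    · obtain ⟨x, hxM, hx1⟩ := hM
      obtain ⟨k, hk⟩ := hcover x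
      exact ⟨k, hmax _ (zpowers_comm k) fun y hy => hcent k x y hk hx1 (hcomm x hxM y hy)⟩
    · push Not at hM
      obtain ⟨k, -⟩ := hcover 1
      refine ⟨k, hmax _ (zpowers_comm k) fun y hy => ?_⟩
      rw [hM y hy]
      exact one_mem _
  · rintro ⟨k, rfl⟩
    refine ⟨zpowers_comm k, fun N hN hle => le_antisymm hle fun y hy => ?_⟩
    exact hcent k (g k) y (mem_zpowers _) (hg k) (hN _ (hle (mem_zpowers _)) y hy)

end MaximalCommutative

theorem Subgroup.mem_zpowers_mk_self {G : Type*} [Group G] (g : G) (x : zpowers g) :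
    x ∈ zpowers ⟨g, mem_zpowers g⟩ := by
  obtain ⟨_, k, rfl⟩ := x
  exact ⟨k, rfl⟩

theorem Monoid.CoprodI.eq_top_of_generators_mem {ι : Type*} {G : ι → Type*} [∀ i, Group (G i)]
    (g : ∀ i, G i) (hg : ∀ i (x : G i), x ∈ zpowers (g i)) {S : Subgroup (CoprodI G)}
    (hS : ∀ i, of (g i) ∈ S) : S = ⊤ := by
  refine (eq_top_iff' S).mpr fun x => ?_
  induction x using Monoid.CoprodI.induction_on with
  | one => exact S.one_mem
  | of i m => exact (zpowers_le.mpr (hS i) : zpowers (g i) ≤ S.comap of) (hg i m)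
  | mul x y hx hy => exact S.mul_mem hx hy

section Schreier

variable {P D : Type*} [Group P] [Group D] (π : P →* D) (σ : D → P)

def schreierElement (p : P) (d : D) : P := (σ (π p * d))⁻¹ * p * σ d

variable {π σ}

theorem schreierElement_one (d : D) : schreierElement π σ 1 d = 1 := by
  simp [schreierElement]

theorem schreierElement_mul (p q : P) (d : D) :
    schreierElement π σ (p * q) d = schreierElement π σ p (π q * d) * schreierElement π σ q d := by
  simp only [schreierElement, map_mul, mul_assoc, mul_inv_cancel_left]

theorem schreierElement_inv (p : P) (d : D) :
    schreierElement π σ p⁻¹ (π p * d) = (schreierElement π σ p d)⁻¹ := by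
  simp only [schreierElement, map_inv, inv_mul_cancel_left, mul_inv_rev, inv_inv, mul_assoc]

theorem map_schreierElement (hσ : ∀ d, π (σ d) = d) (p : P) (d : D) :
    π (schreierElement π σ p d) = 1 := by
  simp [schreierElement, hσ, mul_assoc]

variable (π σ)

def schreierSubgroup (H : Subgroup P) : Subgroup P where
  carrier := {p | ∀ d, schreierElement π σ p d ∈ H}
  one_mem' d := by simp [schreierElement_one]
  mul_mem' {p q} hp hq d := by
    rw [schreierElement_mul]
    exact H.mul_mem (hp _) (hq d)
  inv_mem' {p} hp d := by
    have := schreierElement_inv (π := π) (σ := σ) p (π p⁻¹ * d)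
    rw [← mul_assoc, ← map_mul, mul_inv_cancel, map_one, one_mul] at this
    rw [this]
    exact H.inv_mem (hp _)

variable {π σ}

theorem ker_le_of_schreierSubgroup_eq_top {H : Subgroup P} (hσ : σ 1 = 1)
    (htop : schreierSubgroup π σ H = ⊤) : π.ker ≤ H := by
  intro k hk
  have := (htop ▸ mem_top k : k ∈ schreierSubgroup π σ H) 1
  rwa [schreierElement, mul_one, MonoidHom.mem_ker.mp hk, hσ, inv_one, one_mul, mul_one] at this

end Schreier

section Wreath

variable {P D F : Type*} [Group P] [Group D] [Group F]

def RegularWreathProduct.kerEvalLeft {π : P →* D} (φ : P →* F ≀ᵣ D)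
    (hφ : RegularWreathProduct.rightHom.comp φ = π) : π.ker →* F where
  toFun k := (φ k).left 1
  map_one' := by simp
  map_mul' k l := by
    have hk : (φ k).right = 1 := (DFunLike.congr_fun hφ (k : P)).trans k.2
    simp [hk]

end Wreath

def dihedralMaxAbelianGenerator {n : ℕ} : Option (ZMod n) → DihedralGroup n
  | none => DihedralGroup.r 1
  | some i => DihedralGroup.sr i

theorem dihedralMaxAbelianFamily_eq_zpowers {n : ℕ} (o : Option (ZMod n)) :
    dihedralMaxAbelianFamily n o = zpowers (dihedralMaxAbelianGenerator o) := by
  cases o <;> rfl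

namespace DihedralGroup

variable {n : ℕ}

theorem r_mem_zpowers_r_one (j : ZMod n) : r j ∈ zpowers (r 1 : DihedralGroup n) :=
  ⟨(j.cast : ℤ), by simp only [r_one_zpow, ZMod.intCast_zmod_cast]⟩

theorem mem_zpowers_r_one_iff {x : DihedralGroup n} : x ∈ zpowers (r 1) ↔ ∃ j, x = r j := by
  constructor
  · rintro ⟨k, rfl⟩
    exact ⟨k, r_one_zpow k⟩
  · rintro ⟨j, rfl⟩
    exact r_mem_zpowers_r_one j

theorem mem_zpowers_sr_iff {i : ZMod n} {x : DihedralGroup n} :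
    x ∈ zpowers (sr i) ↔ x = 1 ∨ x = sr i := by
  have hsq : sr i ^ 2 = 1 := by rw [sq, sr_mul_self]
  constructor
  · rintro ⟨k, rfl⟩
    rcases Int.even_or_odd' k with ⟨m, rfl | rfl⟩
    · simp [zpow_mul, hsq]
    · simp [zpow_add, zpow_mul, hsq]
  · rintro (rfl | rfl)
    · exact one_mem _
    · exact mem_zpowers _

theorem r_mul_sr_eq_sr_mul_r_iff (hodd : Odd n) {j i : ZMod n} :
    r j * sr i = sr i * r j ↔ j = 0 := by
  simp [r_mul_sr, sr_mul_r, sub_eq_add_neg, eq_comm, eq_neg_iff_add_eq_zero,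
    ZMod.add_self_eq_zero_iff_eq_zero hodd]

theorem sr_mul_sr_eq_sr_mul_sr_iff (hodd : Odd n) {k i : ZMod n} :
    sr k * sr i = sr i * sr k ↔ k = i := by
  rw [sr_mul_sr, sr_mul_sr, r.injEq, ← neg_sub, neg_eq_iff_add_eq_zero,
    ZMod.add_self_eq_zero_iff_eq_zero hodd, sub_eq_zero]

theorem dihedralMaxAbelianGenerator_ne_one (hn1 : n ≠ 1) (o : Option (ZMod n)) :
    dihedralMaxAbelianGenerator o ≠ 1 := by
  cases o
  · rw [dihedralMaxAbelianGenerator, one_def, ne_eq, r.injEq, ZMod.one_eq_zero_iff]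
    exact hn1
  · rw [dihedralMaxAbelianGenerator, one_def]
    exact nofun

theorem exists_mem_zpowers_dihedralMaxAbelianGenerator (x : DihedralGroup n) :
    ∃ o, x ∈ zpowers (dihedralMaxAbelianGenerator o) := by
  cases x with
  | r j => exact ⟨none, r_mem_zpowers_r_one j⟩
  | sr i => exact ⟨some i, mem_zpowers _⟩

theorem mem_zpowers_dihedralMaxAbelianGenerator_of_mul_comm (hodd : Odd n)
    (o : Option (ZMod n)) {x y : DihedralGroup n}
    (hx : x ∈ zpowers (dihedralMaxAbelianGenerator o)) (hx1 : x ≠ 1) (hxy : x * y = y * x) :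
    y ∈ zpowers (dihedralMaxAbelianGenerator o) := by
  cases o with
  | none =>
    obtain ⟨j, rfl⟩ := mem_zpowers_r_one_iff.mp hx
    cases y with
    | r m => exact r_mem_zpowers_r_one m
    | sr m =>
      have hj : j = 0 := (r_mul_sr_eq_sr_mul_r_iff hodd).mp hxy
      exact absurd (by rw [hj, r_zero]) hx1
  | some i =>
    obtain rfl : x = sr i := (mem_zpowers_sr_iff.mp hx).resolve_left hx1
    refine mem_zpowers_sr_iff.mpr ?_
    cases y with
    | r m => exact .inl (by rw [(r_mul_sr_eq_sr_mul_r_iff hodd).mp hxy.symm, r_zero])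
    | sr m => exact .inr (by rw [(sr_mul_sr_eq_sr_mul_sr_iff hodd).mp hxy.symm])

theorem maximal_commutative_iff (hodd : Odd n) (hn1 : n ≠ 1) (M : Subgroup (DihedralGroup n)) :
    ((∀ x ∈ M, ∀ y ∈ M, x * y = y * x) ∧
      ∀ N : Subgroup (DihedralGroup n),
        (∀ x ∈ N, ∀ y ∈ N, x * y = y * x) → M ≤ N → M = N) ↔
    (M = zpowers (r 1) ∨ ∃ i : ZMod n, M = zpowers (sr i)) := by
  rw [maximal_commutative_iff_exists_eq_zpowers dihedralMaxAbelianGenerator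
    (dihedralMaxAbelianGenerator_ne_one hn1) exists_mem_zpowers_dihedralMaxAbelianGenerator
    (fun o _ _ => mem_zpowers_dihedralMaxAbelianGenerator_of_mul_comm hodd o), Option.exists]
  rfl

end DihedralGroup

open DihedralGroup

abbrev DihedralCoprod (n : ℕ) :=
  Monoid.CoprodI fun o : Option (ZMod n) => ↥(dihedralMaxAbelianFamily n o)

namespace DihedralCoprod

open RegularWreathProduct

variable (n : ℕ)

def proj : DihedralCoprod n →* DihedralGroup n :=
  Monoid.CoprodI.lift fun o => (dihedralMaxAbelianFamily n o).subtype

abbrev KernelBasis := {p : ZMod n × ZMod n // p ≠ 0}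

variable {n}

def generator (o : Option (ZMod n)) : dihedralMaxAbelianFamily n o :=
  ⟨dihedralMaxAbelianGenerator o, dihedralMaxAbelianFamily_eq_zpowers o ▸ mem_zpowers _⟩

theorem mem_zpowers_generator (o : Option (ZMod n)) (x : dihedralMaxAbelianFamily n o) :
    x ∈ zpowers (generator o) := by
  cases o <;> exact mem_zpowers_mk_self _ x

def rotation (a : ZMod n) : DihedralCoprod n :=
  Monoid.CoprodI.of (i := none) ⟨r a, r_mem_zpowers_r_one a⟩

def reflection (i : ZMod n) : DihedralCoprod n :=
  Monoid.CoprodI.of (generator (some i))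

theorem rotation_mul_rotation (a b : ZMod n) : rotation a * rotation b = rotation (a + b) := by
  rw [rotation, rotation, ← map_mul]
  rfl

theorem rotation_zero : rotation (0 : ZMod n) = 1 := by
  rw [rotation, ← map_one (Monoid.CoprodI.of (i := none))]
  rfl

theorem reflection_mul_self (i : ZMod n) : reflection i * reflection i = 1 := by
  rw [reflection, ← map_mul, ← map_one (Monoid.CoprodI.of (i := some i))]
  exact congrArg _ (Subtype.ext (sr_mul_self i))

theorem reflection_inv (i : ZMod n) : (reflection i)⁻¹ = reflection i :=
  inv_eq_of_mul_eq_one_right (reflection_mul_self i)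

@[simp] theorem proj_rotation (a : ZMod n) : proj n (rotation a) = r a := by
  rw [proj, rotation, Monoid.CoprodI.lift_of]
  rfl

@[simp] theorem proj_reflection (i : ZMod n) : proj n (reflection i) = sr i := by
  rw [proj, reflection, Monoid.CoprodI.lift_of]
  rfl

def transversal : DihedralGroup n → DihedralCoprod n
  | r j => rotation j
  | sr j => rotation (-j) * reflection 0

theorem proj_transversal (d : DihedralGroup n) : proj n (transversal d) = d := by
  cases d <;> simp [transversal, r_mul_sr]

theorem transversal_one : transversal (1 : DihedralGroup n) = 1 := rotation_zero

def schreierGen (p : ZMod n × ZMod n) : DihedralCoprod n :=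
  schreierElement (proj n) transversal (reflection p.1) (r p.2)

theorem schreierElement_rotation (a : ZMod n) (d : DihedralGroup n) :
    schreierElement (proj n) transversal (rotation a) d = 1 := by
  cases d with
  | r j =>
    rw [schreierElement, proj_rotation, r_mul_r, transversal, transversal, mul_assoc,
      rotation_mul_rotation, inv_mul_cancel]
  | sr j =>
    have hrot : rotation a * rotation (-j) = rotation (-(j - a)) := by
      rw [rotation_mul_rotation, neg_sub, sub_eq_add_neg]
    rw [schreierElement, proj_rotation, r_mul_sr, transversal, transversal,
      mul_assoc _ (rotation a), ← mul_assoc (rotation a), hrot]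
    group

def letter (p : ZMod n × ZMod n) : FreeGroup (KernelBasis n) :=
  if h : p = 0 then 1 else FreeGroup.of ⟨p, h⟩

@[simp] theorem letter_zero_zero : letter ((0, 0) : ZMod n × ZMod n) = 1 := dif_pos rfl

variable (n) in
def kernelBasisHom : FreeGroup (KernelBasis n) →* DihedralCoprod n :=
  FreeGroup.lift fun p => schreierGen p.1

theorem kernelBasisHom_letter (p : ZMod n × ZMod n) :
    kernelBasisHom n (letter p) = schreierGen p := by
  by_cases h : p = 0
  · subst h
    simp [letter, schreierGen, schreierElement, transversal, rotation_zero]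
  · simp [letter, h, kernelBasisHom]

theorem schreierSubgroup_eq_top :
    schreierSubgroup (proj n) transversal (kernelBasisHom n).range = ⊤ := by
  refine Monoid.CoprodI.eq_top_of_generators_mem generator mem_zpowers_generator fun o d => ?_
  cases o with
  | none =>
    change schreierElement _ _ (rotation 1) d ∈ _
    rw [schreierElement_rotation]
    exact one_mem _
  | some i =>
    change schreierElement _ _ (reflection i) d ∈ _
    cases d with
    | r j => exact ⟨letter (i, j), kernelBasisHom_letter (i, j)⟩
    | sr k =>
      have hk : sr k = proj n (reflection i) * r (k - i) := by simp [sr_mul_r]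
      have := schreierElement_inv (π := proj n) (σ := transversal) (reflection i) (r (k - i))
      rw [reflection_inv] at this
      rw [hk, this]
      exact inv_mem ⟨letter (i, k - i), kernelBasisHom_letter (i, k - i)⟩

theorem range_kernelBasisHom : (kernelBasisHom n).range = (proj n).ker := by
  refine le_antisymm ?_ (ker_le_of_schreierSubgroup_eq_top transversal_one schreierSubgroup_eq_top)
  rintro _ ⟨x, rfl⟩
  induction x using FreeGroup.induction_on with
  | C1 => exact one_mem _
  | of p =>
    rw [MonoidHom.mem_ker, kernelBasisHom, FreeGroup.lift_apply_of]
    exact map_schreierElement proj_transversal _ _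
  | inv_of p hp => rw [map_inv]; exact inv_mem hp
  | mul x y hx hy => rw [map_mul]; exact mul_mem hx hy

/-- `reflectionCocycle i x` is the Schreier element of `reflection i` at `sr i * x`, written as a
letter. -/
def reflectionCocycle (i : ZMod n) : DihedralGroup n → FreeGroup (KernelBasis n)
  | r j => (letter (i, j))⁻¹
  | sr k => letter (i, k - i)

def reflectionWreath (i : ZMod n) : FreeGroup (KernelBasis n) ≀ᵣ DihedralGroup n :=
  ⟨reflectionCocycle i, sr i⟩

theorem reflectionWreath_mul_self (i : ZMod n) : reflectionWreath i * reflectionWreath i = 1 := by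
  ext x
  · cases x <;> simp [reflectionWreath, reflectionCocycle, sr_mul_r, sr_mul_sr]
  · exact sr_mul_self i

theorem orderOf_reflectionWreath_dvd (i : ZMod n) :
    orderOf (reflectionWreath i) ∣ orderOf (generator (some i)) := by
  rw [← Subgroup.orderOf_coe]
  change _ ∣ orderOf (sr i : DihedralGroup n)
  rw [orderOf_sr]
  exact orderOf_dvd_of_pow_eq_one (by rw [sq, reflectionWreath_mul_self])

variable (n) in
noncomputable def toWreath : DihedralCoprod n →* FreeGroup (KernelBasis n) ≀ᵣ DihedralGroup n :=
  Monoid.CoprodI.lift fun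
    | none => inl.comp (dihedralMaxAbelianFamily n none).subtype
    | some i =>
      monoidHomOfForallMemZpowers (mem_zpowers_generator (some i)) (orderOf_reflectionWreath_dvd i)

@[simp] theorem toWreath_rotation (a : ZMod n) : toWreath n (rotation a) = inl (r a) := by
  rw [toWreath, rotation, Monoid.CoprodI.lift_of]
  rfl

@[simp] theorem toWreath_reflection (i : ZMod n) :
    toWreath n (reflection i) = reflectionWreath i := by
  rw [toWreath, reflection, Monoid.CoprodI.lift_of]
  exact monoidHomOfForallMemZpowers_apply_gen _ _

theorem rightHom_comp_toWreath : rightHom.comp (toWreath n) = proj n := by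
  refine Monoid.CoprodI.ext_hom _ _ fun o => ?_
  cases o with
  | none => rfl
  | some i =>
    refine (MonoidHom.eq_iff_eq_on_generator (mem_zpowers_generator (some i)) _ _).mpr ?_
    exact (congrArg RegularWreathProduct.right (toWreath_reflection i)).trans
      (proj_reflection i).symm

theorem toWreath_schreierGen_left (p : ZMod n × ZMod n) :
    (toWreath n (schreierGen p)).left 1 = letter p := by
  obtain ⟨i, j⟩ := p
  simp [schreierGen, schreierElement, transversal, reflectionWreath, reflectionCocycle, sr_mul_r]

theorem kernelBasisHom_injective : Function.Injective (kernelBasisHom n) := by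
  let ψ := kerEvalLeft (toWreath n) rightHom_comp_toWreath
  let ι := (kernelBasisHom n).codRestrict _ fun x => range_kernelBasisHom.le ⟨x, rfl⟩
  have hψι : ψ.comp ι = MonoidHom.id _ := by
    refine FreeGroup.ext_hom _ _ fun p => ?_
    change (toWreath n (kernelBasisHom n (FreeGroup.of p))).left 1 = FreeGroup.of p
    rw [kernelBasisHom, FreeGroup.lift_apply_of, toWreath_schreierGen_left, letter, dif_neg p.2]
  have hleft : Function.LeftInverse ψ ι := DFunLike.congr_fun hψι
  exact fun x y hxy => hleft.injective (Subtype.ext hxy)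

variable (n) in
noncomputable def kerMulEquivFreeGroup : (proj n).ker ≃* FreeGroup (KernelBasis n) :=
  (MulEquiv.subgroupCongr range_kernelBasisHom).symm.trans
    (MonoidHom.ofInjective kernelBasisHom_injective).symm

theorem card_kernelBasis [NeZero n] : Fintype.card (KernelBasis n) = n ^ 2 - 1 := by
  rw [Fintype.card_subtype_compl, Fintype.card_prod, ZMod.card, Fintype.card_subtype_eq, sq]

end DihedralCoprod

/-- For odd `n ≥ 3`, the dihedral group `D_{2n}` has trivial center, its
maximal abelian subgroups are exactly the rotation subgroup `⟨a⟩` and the `n`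
reflection subgroups `⟨aⁱb⟩`, and the kernel of the canonical map from the
free product of these `n + 1` subgroups to `D_{2n}` is a free group of rank
`n² − 1`. -/
theorem dihedral_kernel_of_free_product_is_free
    (n : ℕ) (hn : 3 ≤ n) (hodd : Odd n) :
    Subgroup.center (DihedralGroup n) = ⊥ ∧
    (∀ M : Subgroup (DihedralGroup n),
      ((∀ x ∈ M, ∀ y ∈ M, x * y = y * x) ∧
        ∀ N : Subgroup (DihedralGroup n),
          (∀ x ∈ N, ∀ y ∈ N, x * y = y * x) → M ≤ N → M = N) ↔
      (M = Subgroup.zpowers (DihedralGroup.r 1) ∨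
        ∃ i : ZMod n, M = Subgroup.zpowers (DihedralGroup.sr i))) ∧
    Nonempty
      ((MonoidHom.ker
        (Monoid.CoprodI.lift (fun o => (dihedralMaxAbelianFamily n o).subtype) :
          Monoid.CoprodI (fun o : Option (ZMod n) => ↥(dihedralMaxAbelianFamily n o)) →*
          DihedralGroup n)) ≃*
        FreeGroup (Fin (n ^ 2 - 1))) := by
  have hn1 : n ≠ 1 := by omega
  have : NeZero n := ⟨by omega⟩
  refine ⟨center_eq_bot_of_odd_ne_one hodd hn1, maximal_commutative_iff hodd hn1, ?_⟩
  exact ⟨(DihedralCoprod.kerMulEquivFreeGroup n).trans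
    (FreeGroup.freeGroupCongr (Fintype.equivFinOfCardEq DihedralCoprod.card_kernelBasis))⟩
end

section
/- Let G be a finite group and q ≥ 2. Let G(q) be the colimit, in the category of groups, of the functor from the poset 𝒩_q(G) of subgroups of G of nilpotency class less than q (ordered by inclusion) which sends each subgroup to itself and each inclusion to the inclusion homomorphism. Let ℤ[G] denote the free abelian group on the underlying set of G, and let I_q(G) ≤ ℤ[G] be the subgroup generated by the elements [y] − [x·y] + [x] over all pairs x, y ∈ G such that the subgroup ⟨x, y⟩ has nilpotency class less than q. Then the abelianization of G(q) is isomorphic, as an abelian group, to ℤ[G]/I_q(G). -/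
/-- The poset (here, the index type) of subgroups of `G` of nilpotency class
less than `q`, i.e. with `Γ^q = 1`; in Mathlib's indexing this is
`lowerCentralSeries _ (q - 1) = ⊥`. -/
abbrev NilpotentClassLtFamily (G : Type*) [Group G] (q : ℕ) : Type _ :=
  {H : Subgroup G // Subgroup.lowerCentralSeries (⊤ : Subgroup ↥H) (q - 1) = ⊥}

/-- The colimit, in the category of groups, of the inclusion functor on the
poset of subgroups of `G` of nilpotency class less than `q`, realized by its
standard construction: the quotient of the free product of all the subgroups
in the family by the relations identifying each element of a subgroup with its
image under every inclusion of the family. -/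
abbrev GroupColimitOfNilpotentFamily (G : Type*) [Group G] (q : ℕ) : Type _ :=
  Monoid.CoprodI (fun H : NilpotentClassLtFamily G q => ↥H.1) ⧸
    Subgroup.normalClosure
      {w | ∃ (A B : NilpotentClassLtFamily G q) (h : A.1 ≤ B.1) (x : ↥A.1),
        w = Monoid.CoprodI.of (M := fun H : NilpotentClassLtFamily G q => ↥H.1) (i := A) x *
          (Monoid.CoprodI.of (M := fun H : NilpotentClassLtFamily G q => ↥H.1) (i := B)
            (Subgroup.inclusion h x))⁻¹}

/-- The subgroup `I_q(G)` of `ℤ[G]` generated by the elements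
`[y] − [x·y] + [x]` over all pairs `x, y` generating a subgroup of nilpotency
class less than `q`. -/
noncomputable def augmentationIdealOfNilpotentPairs (G : Type*) [Group G] (q : ℕ) :
    AddSubgroup (G →₀ ℤ) :=
  AddSubgroup.closure
    {f | ∃ x y : G,
      Subgroup.lowerCentralSeries (⊤ : Subgroup ↥(Subgroup.closure ({x, y} : Set G))) (q - 1) = ⊥ ∧
      f = Finsupp.single y 1 - Finsupp.single (x * y) 1 + Finsupp.single x 1}

/-!
Each `H` in the family maps to `ℤ[G]/I_q(G)` by `h ↦ [h]`: this is a homomorphism because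
`⟨x, y⟩ ≤ H` has class less than `q` for `x, y ∈ H`, and `[1] ∈ I_q(G)`
(take `x = y = 1`).
These maps are compatible with the inclusions, so they induce a map out of the abelianized
colimit. Conversely `[g]` is sent to the image of `g` under the cyclic subgroup `⟨g⟩`, which
belongs to the family as `q ≥ 2`; any `H ∋ g` gives the same image, and using `H = ⟨x, y⟩`
shows that the generators of `I_q(G)` are killed. The two maps are mutually inverse on
generators.
-/

namespace Subgroup

variable {G : Type*} [Group G]

theorem top_lowerCentralSeries_eq_bot_iff (H : Subgroup G) (n : ℕ) :
    (⊤ : Subgroup H).lowerCentralSeries n = ⊥ ↔ H.lowerCentralSeries n = ⊥ := by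
  rw [← top_subtype_lowerCentralSeries H n, map_eq_bot_iff_of_injective _ H.subtype_injective]

theorem top_lowerCentralSeries_eq_bot_of_le {K H : Subgroup G} (hKH : K ≤ H) {n : ℕ}
    (hH : (⊤ : Subgroup H).lowerCentralSeries n = ⊥) :
    (⊤ : Subgroup K).lowerCentralSeries n = ⊥ := by
  rw [top_lowerCentralSeries_eq_bot_iff] at hH ⊢
  exact le_bot_iff.mp (hH ▸ lowerCentralSeries_mono n hKH)

theorem lowerCentralSeries_eq_bot_of_isMulCommutative (H : Subgroup G) [IsMulCommutative H]
    {n : ℕ} (hn : 1 ≤ n) : H.lowerCentralSeries n = ⊥ :=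
  le_bot_iff.mp <| commutator_self_eq_bot_iff.mpr ‹_› ▸ H.lowerCentralSeries_antitone hn

end Subgroup

section

open Subgroup Monoid

variable {G : Type*} [Group G] {q : ℕ}

namespace NilpotentClassLtFamily

def bot : NilpotentClassLtFamily G q :=
  ⟨⊥, by
    rw [top_lowerCentralSeries_eq_bot_iff]
    exact le_bot_iff.mp (lowerCentralSeries_le_self _ _)⟩

def zpowers (hq : 2 ≤ q) (g : G) : NilpotentClassLtFamily G q :=
  ⟨Subgroup.zpowers g, by
    rw [top_lowerCentralSeries_eq_bot_iff]
    exact lowerCentralSeries_eq_bot_of_isMulCommutative _ (by omega)⟩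

end NilpotentClassLtFamily

namespace GroupColimitOfNilpotentFamily

def ι (H : NilpotentClassLtFamily G q) : H.1 →* GroupColimitOfNilpotentFamily G q :=
  (QuotientGroup.mk' _).comp (CoprodI.of (M := fun H : NilpotentClassLtFamily G q => H.1))

theorem ι_inclusion {A B : NilpotentClassLtFamily G q} (h : A.1 ≤ B.1) (x : A.1) :
    ι B (inclusion h x) = ι A x := by
  refine (mul_inv_eq_one.mp ?_).symm
  simp only [ι, MonoidHom.comp_apply]
  rw [← map_inv, ← map_mul, QuotientGroup.mk'_apply, QuotientGroup.eq_one_iff]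
  exact subset_normalClosure ⟨A, B, h, x, rfl⟩

theorem hom_ext {M : Type*} [Monoid M] {f g : GroupColimitOfNilpotentFamily G q →* M}
    (h : ∀ H, f.comp (ι H) = g.comp (ι H)) : f = g :=
  QuotientGroup.monoidHom_ext _ <| CoprodI.ext_hom _ _ h

def lift {M : Type*} [Group M] (φ : ∀ H : NilpotentClassLtFamily G q, H.1 →* M)
    (hφ : ∀ (A B : NilpotentClassLtFamily G q) (h : A.1 ≤ B.1) (x : A.1),
      φ B (inclusion h x) = φ A x) :
    GroupColimitOfNilpotentFamily G q →* M :=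
  QuotientGroup.lift _ (CoprodI.lift φ) <| normalClosure_le_normal <| by
    rintro _ ⟨A, B, h, x, rfl⟩
    simp [hφ]

theorem lift_ι {M : Type*} [Group M] (φ : ∀ H : NilpotentClassLtFamily G q, H.1 →* M) hφ
    (H : NilpotentClassLtFamily G q) (x : H.1) : lift φ hφ (ι H x) = φ H x := by
  simp [lift, ι]

def ofElem (hq : 2 ≤ q) (g : G) : GroupColimitOfNilpotentFamily G q :=
  ι (NilpotentClassLtFamily.zpowers hq g) ⟨g, mem_zpowers g⟩

theorem ofElem_eq_ι (hq : 2 ≤ q) {H : NilpotentClassLtFamily G q} {g : G} (hg : g ∈ H.1) :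
    ofElem hq g = ι H ⟨g, hg⟩ :=
  (ι_inclusion (zpowers_le.mpr hg) _).symm

end GroupColimitOfNilpotentFamily

open GroupColimitOfNilpotentFamily

namespace augmentationIdealOfNilpotentPairs

theorem sub_single_mul_add_mem {H : NilpotentClassLtFamily G q} {x y : G} (hx : x ∈ H.1)
    (hy : y ∈ H.1) :
    Finsupp.single y 1 - Finsupp.single (x * y) 1 + Finsupp.single x 1 ∈
      augmentationIdealOfNilpotentPairs G q := by
  refine AddSubgroup.subset_closure ⟨x, y, top_lowerCentralSeries_eq_bot_of_le ?_ H.2, rfl⟩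
  rw [closure_le, Set.insert_subset_iff, Set.singleton_subset_iff]
  exact ⟨hx, hy⟩

theorem mk_single_mul {H : NilpotentClassLtFamily G q} {x y : G} (hx : x ∈ H.1) (hy : y ∈ H.1) :
    (QuotientAddGroup.mk (Finsupp.single (x * y) 1) :
        (G →₀ ℤ) ⧸ augmentationIdealOfNilpotentPairs G q) =
      QuotientAddGroup.mk (Finsupp.single x 1) + QuotientAddGroup.mk (Finsupp.single y 1) := by
  rw [← QuotientAddGroup.mk_add, QuotientAddGroup.eq]
  convert sub_single_mul_add_mem hx hy using 1
  abel

theorem mk_single_one :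
    (QuotientAddGroup.mk (Finsupp.single (1 : G) 1) :
        (G →₀ ℤ) ⧸ augmentationIdealOfNilpotentPairs G q) = 0 := by
  have h := mk_single_mul (H := (NilpotentClassLtFamily.bot : NilpotentClassLtFamily G q))
    (one_mem ⊥) (one_mem ⊥)
  rwa [mul_one, left_eq_add] at h

end augmentationIdealOfNilpotentPairs

open augmentationIdealOfNilpotentPairs

noncomputable def subgroupToQuotient (H : NilpotentClassLtFamily G q) :
    H.1 →* Multiplicative ((G →₀ ℤ) ⧸ augmentationIdealOfNilpotentPairs G q) where
  toFun x := .ofAdd (QuotientAddGroup.mk (Finsupp.single (x : G) 1))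
  map_one' := congrArg Multiplicative.ofAdd mk_single_one
  map_mul' x y := congrArg Multiplicative.ofAdd (mk_single_mul x.2 y.2)

theorem subgroupToQuotient_inclusion {A B : NilpotentClassLtFamily G q} (h : A.1 ≤ B.1)
    (x : A.1) : subgroupToQuotient B (inclusion h x) = subgroupToQuotient A x :=
  rfl

noncomputable def abelianizationToQuotient :
    Abelianization (GroupColimitOfNilpotentFamily G q) →*
      Multiplicative ((G →₀ ℤ) ⧸ augmentationIdealOfNilpotentPairs G q) :=
  Abelianization.lift (lift subgroupToQuotient fun _ _ => subgroupToQuotient_inclusion)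

noncomputable def quotientToAbelianization (hq : 2 ≤ q) :
    (G →₀ ℤ) ⧸ augmentationIdealOfNilpotentPairs G q →+
      Additive (Abelianization (GroupColimitOfNilpotentFamily G q)) :=
  QuotientAddGroup.lift _
    (Finsupp.liftAddHom fun g => zmultiplesHom _ (.ofMul (Abelianization.of (ofElem hq g)))) <| by
    rw [augmentationIdealOfNilpotentPairs, AddSubgroup.closure_le]
    rintro _ ⟨x, y, hK, rfl⟩
    let K : NilpotentClassLtFamily G q := ⟨closure {x, y}, hK⟩
    have hx : x ∈ K.1 := subset_closure (by simp)
    have hy : y ∈ K.1 := subset_closure (by simp)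
    have hxy : ofElem hq (x * y) = ofElem hq x * ofElem hq y := by
      rw [ofElem_eq_ι hq hx, ofElem_eq_ι hq hy, ofElem_eq_ι hq (mul_mem hx hy), ← map_mul]
      rfl
    rw [SetLike.mem_coe, AddMonoidHom.mem_ker, map_add, map_sub]
    simp only [Finsupp.liftAddHom_apply_single, zmultiplesHom_apply, one_zsmul, hxy, map_mul,
      ofMul_mul]
    abel

theorem quotientToAbelianization_mk_single (hq : 2 ≤ q) (g : G) :
    quotientToAbelianization hq (QuotientAddGroup.mk (Finsupp.single g 1)) =
      .ofMul (Abelianization.of (ofElem hq g)) := by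
  simp [quotientToAbelianization]

theorem abelianizationToQuotient_of_ι (H : NilpotentClassLtFamily G q) (x : H.1) :
    abelianizationToQuotient (Abelianization.of (ι H x)) =
      .ofAdd (QuotientAddGroup.mk (Finsupp.single (x : G) 1)) := by
  rw [abelianizationToQuotient, Abelianization.lift_apply_of, lift_ι]
  rfl

noncomputable def abelianizationMulEquivQuotient (hq : 2 ≤ q) :
    Abelianization (GroupColimitOfNilpotentFamily G q) ≃*
      Multiplicative ((G →₀ ℤ) ⧸ augmentationIdealOfNilpotentPairs G q) :=
  abelianizationToQuotient.toMulEquiv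
    (AddMonoidHom.toMultiplicativeLeft (quotientToAbelianization hq))
    (Abelianization.hom_ext _ _ <| hom_ext fun _ => MonoidHom.ext fun x => by
      simp [abelianizationToQuotient_of_ι, quotientToAbelianization_mk_single,
        ofElem_eq_ι hq x.2])
    (by ext g; simp [quotientToAbelianization_mk_single, ofElem, abelianizationToQuotient_of_ι])

end

theorem abelianization_of_colimit_iso_ZG_mod_Iq_general
    (G : Type*) [Group G] (q : ℕ) (hq : 2 ≤ q) :
    Nonempty
      (Additive (Abelianization (GroupColimitOfNilpotentFamily G q)) ≃+
        (G →₀ ℤ) ⧸ augmentationIdealOfNilpotentPairs G q) :=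
  ⟨MulEquiv.toAdditiveLeft (abelianizationMulEquivQuotient hq)⟩

/-- For a finite group `G` and `q ≥ 2`, the abelianization of the colimit
`G(q)` of the family of subgroups of nilpotency class less than `q` is
isomorphic as an abelian group to `ℤ[G]/I_q(G)`. -/
theorem abelianization_of_colimit_iso_ZG_mod_Iq
    (G : Type*) [Group G] [Finite G] (q : ℕ) (hq : 2 ≤ q) :
    Nonempty
      (Additive (Abelianization (GroupColimitOfNilpotentFamily G q)) ≃+
        (G →₀ ℤ) ⧸ augmentationIdealOfNilpotentPairs G q) :=
  abelianization_of_colimit_iso_ZG_mod_Iq_general G q hq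
end
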